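/- arXiv:2501.09740 — 8 statements merged into one kernel-verified Lean document; each statement's English description precedes it below -/
import Mathlib

section
/- Fix a price-distribution sequence π, an allocation sequence x, and a cost c with c ≤ min P. Then the pessimistic allocation x_* is a well-defined allocation sequence (each x_*^t maps P into [0,1] and is nonincreasing), x_* is indistinguishable with x, and for every allocation sequence z indistinguishable with x one has R^T(z, c) ≤ R^T(x_*, c). Hence the pessimistic regret satisfies R̄^T(x, c) = R^T(x_*, c). -/
open Finset

def IsPMF (P : Finset ℝ) (f : ℝ → ℝ) : Prop :=
  (∀ p, 0 ≤ f p) ∧ (∑ p ∈ P, f p = 1) ∧ ∀ p, p ∉ P → f p = 0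

noncomputable def suppF (P : Finset ℝ) (f : ℝ → ℝ) : Finset ℝ :=
  P.filter fun p => 0 < f p

def IsAllocSeq (P : Finset ℝ) {T : ℕ} (x : Fin T → ℝ → ℝ) : Prop :=
  ∀ t : Fin T, (∀ p ∈ P, x t p ∈ Set.Icc (0:ℝ) 1) ∧
    ∀ p ∈ P, ∀ q ∈ P, p ≤ q → x t q ≤ x t p

noncomputable def regret (P : Finset ℝ) (hP : P.Nonempty) {T : ℕ}
    (π x : Fin T → ℝ → ℝ) (c : ℝ) : ℝ :=
  haveI : Nonempty {p : ℝ // p ∈ P} := Finset.nonempty_coe_sort.mpr hP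
  Finset.univ.sup' Finset.univ_nonempty
    fun σ : {p : ℝ // p ∈ P} → {p : ℝ // p ∈ P} =>
      (T : ℝ)⁻¹ * ∑ t : Fin T, ∑ p ∈ P.attach,
        π t p.1 * (((σ p).1 - c) * x t (σ p).1 - (p.1 - c) * x t p.1)

noncomputable def pessA (P : Finset ℝ) {T : ℕ} (π x : Fin T → ℝ → ℝ)
    (t : Fin T) (p : ℝ) : ℝ :=
  if p ∈ suppF P (π t) then x t p
  else if h : ((suppF P (π t)).filter fun r => r ≤ p).Nonempty then
    x t (((suppF P (π t)).filter fun r => r ≤ p).max' h)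
  else 1

def Indist (P : Finset ℝ) {T : ℕ} (π x z : Fin T → ℝ → ℝ) : Prop :=
  ∀ t : Fin T, ∀ p ∈ suppF P (π t), x t p = z t p

noncomputable def pregret (P : Finset ℝ) (hP : P.Nonempty) {T : ℕ}
    (π x : Fin T → ℝ → ℝ) (c : ℝ) : ℝ :=
  sSup ((fun z => regret P hP π z c) '' {z | IsAllocSeq P z ∧ Indist P π x z})

lemma pessA_eq_dite (P : Finset ℝ) {T : ℕ} (π x : Fin T → ℝ → ℝ) (t : Fin T) (p : ℝ) :
    pessA P π x t p =
      if h : ((suppF P (π t)).filter fun r => r ≤ p).Nonempty then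
        x t (((suppF P (π t)).filter fun r => r ≤ p).max' h) else 1 := by
  unfold pessA
  by_cases hp : p ∈ suppF P (π t)
  · have hpmem : p ∈ (suppF P (π t)).filter fun r => r ≤ p :=
      mem_filter.mpr ⟨hp, le_refl p⟩
    have hne : ((suppF P (π t)).filter fun r => r ≤ p).Nonempty := ⟨p, hpmem⟩
    have hmax : ((suppF P (π t)).filter fun r => r ≤ p).max' hne = p :=
      le_antisymm (mem_filter.mp (max'_mem _ hne)).2 (le_max' _ p hpmem)
    simp [hp, hne, hmax]
  · simp [hp]

lemma pessA_supp (P : Finset ℝ) {T : ℕ} (π x : Fin T → ℝ → ℝ) (t : Fin T) (p : ℝ)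
    (hp : p ∈ suppF P (π t)) : pessA P π x t p = x t p := by
  unfold pessA; rw [if_pos hp]

lemma z_le_pessA (P : Finset ℝ) {T : ℕ} (π x z : Fin T → ℝ → ℝ)
    (hz : IsAllocSeq P z) (hind : Indist P π x z) (t : Fin T) (p : ℝ) (hp : p ∈ P) :
    z t p ≤ pessA P π x t p := by
  by_cases hps : p ∈ suppF P (π t)
  · rw [pessA_supp P π x t p hps]
    exact (hind t p hps).ge
  · rw [pessA_eq_dite]
    by_cases h : ((suppF P (π t)).filter fun r => r ≤ p).Nonempty
    · rw [dif_pos h]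
      set r := ((suppF P (π t)).filter fun r => r ≤ p).max' h with hr
      have hrmem := max'_mem _ h
      have hrsupp : r ∈ suppF P (π t) := (mem_filter.mp hrmem).1
      have hrP : r ∈ P := mem_of_mem_filter _ hrsupp
      have hrp : r ≤ p := (mem_filter.mp hrmem).2
      calc z t p ≤ z t r := (hz t).2 r hrP p hp hrp
        _ = x t r := (hind t r hrsupp).symm
    · rw [dif_neg h]
      exact ((hz t).1 p hp).2

/-- the pessimistic allocation `x_*` is a well-defined allocation sequence,
it is indistinguishable with `x`, it dominates (in regret) every allocation sequence
indistinguishable with `x`, and the pessimistic regret equals its regret. -/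
theorem pessimistic_allocation_achieves_sup
    (P : Finset ℝ) (hP : P.Nonempty) (hpos : ∀ p ∈ P, 0 < p)
    {T : ℕ} (hT : 1 ≤ T) (π : Fin T → ℝ → ℝ)
    (hpmf : ∀ t, IsPMF P (π t)) (hsupp : ∀ t, (suppF P (π t)).Nonempty)
    (x : Fin T → ℝ → ℝ) (hx : IsAllocSeq P x)
    (c : ℝ) (hc : c ≤ P.min' hP) :
    IsAllocSeq P (fun t => pessA P π x t) ∧
    Indist P π x (fun t => pessA P π x t) ∧
    (∀ z : Fin T → ℝ → ℝ, IsAllocSeq P z → Indist P π x z →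
      regret P hP π z c ≤ regret P hP π (fun t => pessA P π x t) c) ∧
    pregret P hP π x c = regret P hP π (fun t => pessA P π x t) c := by
  have halloc : IsAllocSeq P (fun t => pessA P π x t) := by
    intro t
    constructor
    · intro p hp
      show pessA P π x t p ∈ Set.Icc (0:ℝ) 1
      rw [pessA_eq_dite]
      by_cases h : ((suppF P (π t)).filter fun r => r ≤ p).Nonempty
      · rw [dif_pos h]
        exact (hx t).1 _ (mem_of_mem_filter _ ((mem_filter.mp (max'_mem _ h)).1))
      · rw [dif_neg h]; exact ⟨zero_le_one, le_refl 1⟩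
    · intro p hp q hq hpq
      show pessA P π x t q ≤ pessA P π x t p
      rw [pessA_eq_dite, pessA_eq_dite]
      by_cases h : ((suppF P (π t)).filter fun r => r ≤ p).Nonempty
      · have hsub : ((suppF P (π t)).filter fun r => r ≤ p) ⊆
            ((suppF P (π t)).filter fun r => r ≤ q) := by
          intro r hr
          exact mem_filter.mpr ⟨(mem_filter.mp hr).1, le_trans (mem_filter.mp hr).2 hpq⟩
        have h2 : ((suppF P (π t)).filter fun r => r ≤ q).Nonempty := h.mono hsub
        rw [dif_pos h, dif_pos h2]
        have hmle : ((suppF P (π t)).filter fun r => r ≤ p).max' h ≤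
            ((suppF P (π t)).filter fun r => r ≤ q).max' h2 :=
          le_max' _ _ (hsub (max'_mem _ h))
        exact (hx t).2 _ (mem_of_mem_filter _ ((mem_filter.mp (max'_mem _ h)).1))
          _ (mem_of_mem_filter _ ((mem_filter.mp (max'_mem _ h2)).1)) hmle
      · rw [dif_neg h]
        by_cases h2 : ((suppF P (π t)).filter fun r => r ≤ q).Nonempty
        · rw [dif_pos h2]
          exact ((hx t).1 _ (mem_of_mem_filter _ ((mem_filter.mp (max'_mem _ h2)).1))).2
        · rw [dif_neg h2]
  have hind : Indist P π x (fun t => pessA P π x t) := by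
    intro t p hp
    exact (pessA_supp P π x t p hp).symm
  have hdom : ∀ z : Fin T → ℝ → ℝ, IsAllocSeq P z → Indist P π x z →
      regret P hP π z c ≤ regret P hP π (fun t => pessA P π x t) c := by
    intro z hz hzind
    haveI : Nonempty {p : ℝ // p ∈ P} := Finset.nonempty_coe_sort.mpr hP
    unfold regret
    refine Finset.sup'_le _ _ fun σ _ => le_trans ?_ (Finset.le_sup' _ (mem_univ σ))
    refine mul_le_mul_of_nonneg_left (Finset.sum_le_sum fun t _ =>
      Finset.sum_le_sum fun p _ => ?_) (by positivity)
    show π t p.1 * (((σ p).1 - c) * z t (σ p).1 - (p.1 - c) * z t p.1) ≤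
      π t p.1 * (((σ p).1 - c) * pessA P π x t (σ p).1 - (p.1 - c) * pessA P π x t p.1)
    by_cases hπ : 0 < π t p.1
    · have hpsupp : p.1 ∈ suppF P (π t) := mem_filter.mpr ⟨p.2, hπ⟩
      have hzp : z t p.1 = pessA P π x t p.1 := by
        rw [pessA_supp P π x t p.1 hpsupp]; exact (hzind t p.1 hpsupp).symm
      have hσc : 0 ≤ (σ p).1 - c :=
        sub_nonneg.mpr (le_trans hc (P.min'_le _ (σ p).2))
      have hσle : ((σ p).1 - c) * z t (σ p).1 ≤ ((σ p).1 - c) * pessA P π x t (σ p).1 :=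
        mul_le_mul_of_nonneg_left (z_le_pessA P π x z hz hzind t (σ p).1 (σ p).2) hσc
      rw [hzp]
      exact mul_le_mul_of_nonneg_left (sub_le_sub_right hσle _) ((hpmf t).1 p.1)
    · have h0 : π t p.1 = 0 := le_antisymm (not_lt.mp hπ) ((hpmf t).1 p.1)
      simp [h0]
  refine ⟨halloc, hind, hdom, ?_⟩
  have hmem : regret P hP π (fun t => pessA P π x t) c ∈
      (fun z => regret P hP π z c) '' {z | IsAllocSeq P z ∧ Indist P π x z} :=
    ⟨_, ⟨halloc, hind⟩, rfl⟩
  have hub : ∀ y ∈ (fun z => regret P hP π z c) '' {z | IsAllocSeq P z ∧ Indist P π x z},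
      y ≤ regret P hP π (fun t => pessA P π x t) c := by
    rintro y ⟨z, ⟨hz1, hz2⟩, rfl⟩
    exact hdom z hz1 hz2
  unfold pregret
  exact le_antisymm (csSup_le ⟨_, hmem⟩ hub)
    (le_csSup ⟨regret P hP π (fun t => pessA P π x t) c, hub⟩ hmem)
end

section
/- Let P = {p_1 < … < p_k} with k ≥ 2, c ≤ p_1, a ∈ (0,1], and let π satisfy π^t(p_k) = 0 and π^t(p_{k−1}) > 0 for all t. Let x and z be the allocation sequences with x^t(p_i) = a for i < k, x^t(p_k) = 0, and z^t(p_i) = a for all i, and set δ = a·(p_k − p_{k−1}). Then for every function A from transcripts (tuples ((y^t, p^t, π^t))_{t=1}^T) to ℝ, with prices p^t ∼ π^t drawn independently, Pr[|A((x^t(p^t), p^t, π^t)_t) − R^T(x, c)| < δ/2] + Pr[|A((z^t(p^t), p^t, π^t)_t) − R^T(z, c)| < δ/2] ≤ 1. In particular, no deterministic regret estimator can estimate the calibrated regret within accuracy δ/2 with probability strictly greater than 1/2 on both x and z. -/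
open Finset

open Classical in
noncomputable def probM (P : Finset ℝ) {T : ℕ} (π : Fin T → ℝ → ℝ)
    (E : (Fin T → ℝ) → Prop) : ℝ :=
  ∑ ps ∈ Fintype.piFinset (fun _ : Fin T => P),
    if E ps then ∏ t, π t (ps t) else 0

/-- no (deterministic) transcript-based estimator can be accurate within
`δ/2 = a (p_k - p_{k-1})/2` with high probability on both of the indistinguishable
allocation sequences `x` and `z`: the two success probabilities sum to at most 1. -/
theorem no_two_sided_consistent_estimator
    (k : ℕ) (hk : 2 ≤ k) (v : Fin k → ℝ) (hv : StrictMono v)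
    (hvpos : ∀ i, 0 < v i)
    (P : Finset ℝ) (hPdef : P = Finset.image v Finset.univ) (hP : P.Nonempty)
    {T : ℕ} (hT : 1 ≤ T)
    (π : Fin T → ℝ → ℝ) (hpmf : ∀ t, IsPMF P (π t))
    (c : ℝ) (hc : c ≤ v ⟨0, by omega⟩)
    (a : ℝ) (ha : a ∈ Set.Ioc (0:ℝ) 1)
    (hπk : ∀ t, π t (v ⟨k - 1, by omega⟩) = 0)
    (hπk1 : ∀ t, 0 < π t (v ⟨k - 2, by omega⟩))
    (x z : Fin T → ℝ → ℝ)
    (hxdef : ∀ t p, x t p = if p = v ⟨k - 1, by omega⟩ then 0 else a)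
    (hzdef : ∀ t p, z t p = a)
    (A : (Fin T → ℝ × ℝ × (ℝ → ℝ)) → ℝ) :
    probM P π (fun ps =>
        |A (fun t => (x t (ps t), ps t, π t)) - regret P hP π x c| <
          a * (v ⟨k - 1, by omega⟩ - v ⟨k - 2, by omega⟩) / 2) +
    probM P π (fun ps =>
        |A (fun t => (z t (ps t), ps t, π t)) - regret P hP π z c| <
          a * (v ⟨k - 1, by omega⟩ - v ⟨k - 2, by omega⟩) / 2) ≤ 1 := by
  classical
  obtain ⟨ha0, ha1⟩ := ha
  have hk1 : k - 1 < k := by omega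
  have hk2 : k - 2 < k := by omega
  have hlt : (⟨k - 2, hk2⟩ : Fin k) < ⟨k - 1, hk1⟩ := by
    simp only [Fin.mk_lt_mk]; omega
  have hvlt : v ⟨k - 2, hk2⟩ < v ⟨k - 1, hk1⟩ := hv hlt
  have hc1 : c ≤ v ⟨k - 2, hk2⟩ :=
    le_trans hc (hv.monotone (by simp [Fin.le_def]))
  set pk : ℝ := v ⟨k - 1, hk1⟩ with hpkdef
  set q2 : ℝ := v ⟨k - 2, hk2⟩ with hq2def
  set δ : ℝ := a * (pk - q2) with hδ
  have hδpos : 0 < δ := mul_pos ha0 (by linarith)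
  have hmem : ∀ i : Fin k, v i ∈ P := by
    intro i; rw [hPdef]; exact Finset.mem_image_of_mem v (Finset.mem_univ i)
  have hPv : ∀ p ∈ P, ∃ i : Fin k, v i = p := by
    intro p hp; rw [hPdef] at hp; simpa using hp
  have hTne : (T : ℝ) ≠ 0 := by positivity
  have hsum1 : ∀ t : Fin T, ∑ p ∈ P.attach, π t p.1 = 1 := by
    intro t; rw [Finset.sum_attach]; exact (hpmf t).2.1
  -- key bound on x-values
  have hxle : ∀ q ∈ P, ∀ t : Fin T, (q - c) * x t q ≤ a * (q2 - c) := by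
    intro q hq t
    rw [hxdef]
    by_cases h : q = pk
    · rw [if_pos h, mul_zero]
      exact mul_nonneg ha0.le (by linarith)
    · rw [if_neg h]
      obtain ⟨i, hi⟩ := hPv q hq
      have hine : i ≠ ⟨k - 1, hk1⟩ := by
        intro hcon; exact h (by rw [← hi, hcon])
      have hile : i ≤ (⟨k - 2, hk2⟩ : Fin k) := by
        have h2 := i.2
        have : i.1 ≠ k - 1 := fun hh => hine (Fin.ext hh)
        simp only [Fin.le_def]; omega
      have hq2 : q ≤ q2 := by rw [← hi]; exact hv.monotone hile
      have := mul_le_mul_of_nonneg_right (show q - c ≤ q2 - c by linarith) ha0.le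
      linarith
  -- upper bound on regret of x
  have hRx : regret P hP π x c ≤
      (T : ℝ)⁻¹ * ∑ t : Fin T, ∑ p ∈ P.attach, π t p.1 * (a * (q2 - p.1)) := by
    unfold regret
    apply Finset.sup'_le
    intro σ _
    apply mul_le_mul_of_nonneg_left _ (by positivity)
    apply Finset.sum_le_sum; intro t _
    apply Finset.sum_le_sum; intro p _
    by_cases hz0 : π t p.1 = 0
    · simp [hz0]
    · have hππ : 0 ≤ π t p.1 := (hpmf t).1 p.1
      have hppos : 0 < π t p.1 := lt_of_le_of_ne hππ (Ne.symm hz0)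
      have hpne : p.1 ≠ pk := by
        intro h; rw [h] at hppos; exact absurd (hπk t) (ne_of_gt hppos)
      have hxp : x t p.1 = a := by rw [hxdef, if_neg hpne]
      have h1 : ((σ p).1 - c) * x t (σ p).1 ≤ a * (q2 - c) := hxle _ (σ p).2 t
      apply mul_le_mul_of_nonneg_left _ hππ
      rw [hxp]
      nlinarith [h1]
  -- lower bound on regret of z
  have hRz : (T : ℝ)⁻¹ * ∑ t : Fin T, ∑ p ∈ P.attach, π t p.1 * (a * (pk - p.1)) ≤
      regret P hP π z c := by
    unfold regret
    refine le_trans (le_of_eq ?_)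
      (Finset.le_sup' _ (Finset.mem_univ (fun _ => (⟨pk, hmem _⟩ : {p : ℝ // p ∈ P}))))
    congr 1
    apply Finset.sum_congr rfl; intro t _
    apply Finset.sum_congr rfl; intro p _
    rw [hzdef, hzdef]
    ring
  -- difference equals δ
  have hdiff : (T : ℝ)⁻¹ * ∑ t : Fin T, ∑ p ∈ P.attach, π t p.1 * (a * (pk - p.1)) -
      (T : ℝ)⁻¹ * ∑ t : Fin T, ∑ p ∈ P.attach, π t p.1 * (a * (q2 - p.1)) = δ := by
    rw [← mul_sub, ← Finset.sum_sub_distrib]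
    have hterm : ∀ t : Fin T,
        (∑ p ∈ P.attach, π t p.1 * (a * (pk - p.1))) -
          ∑ p ∈ P.attach, π t p.1 * (a * (q2 - p.1)) = δ := by
      intro t
      rw [← Finset.sum_sub_distrib]
      have : ∀ p ∈ P.attach,
          π t p.1 * (a * (pk - p.1)) - π t p.1 * (a * (q2 - p.1)) = π t p.1 * δ := by
        intro p _; rw [hδ]; ring
      rw [Finset.sum_congr rfl this, ← Finset.sum_mul, hsum1 t, one_mul]
    rw [Finset.sum_congr rfl (fun t _ => hterm t), Finset.sum_const, Finset.card_univ,
      Fintype.card_fin, nsmul_eq_mul]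
    field_simp
  have hgap : δ ≤ regret P hP π z c - regret P hP π x c := by linarith
  -- now the probability argument
  unfold probM
  rw [← Finset.sum_add_distrib]
  have hle : ∀ ps ∈ Fintype.piFinset (fun _ : Fin T => P),
      ((if |A (fun t => (x t (ps t), ps t, π t)) - regret P hP π x c| < δ / 2
          then ∏ t, π t (ps t) else 0) +
        (if |A (fun t => (z t (ps t), ps t, π t)) - regret P hP π z c| < δ / 2
          then ∏ t, π t (ps t) else 0)) ≤ ∏ t, π t (ps t) := by
    intro ps _
    have hwnn : 0 ≤ ∏ t, π t (ps t) :=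
      Finset.prod_nonneg fun t _ => (hpmf t).1 (ps t)
    by_cases hw : ∏ t, π t (ps t) = 0
    · rw [hw]; split_ifs <;> norm_num
    · have hne : ∀ t, π t (ps t) ≠ 0 := by
        intro t h; exact hw (Finset.prod_eq_zero (Finset.mem_univ t) h)
      have hpsne : ∀ t, ps t ≠ pk := by
        intro t h; exact hne t (by rw [h]; exact hπk t)
      have heq : (fun t => (x t (ps t), ps t, π t)) =
          (fun t => (z t (ps t), ps t, π t)) := by
        funext t; rw [hxdef, hzdef, if_neg (hpsne t)]
      rw [heq]
      split_ifs with h1 h2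
      · exfalso
        rw [abs_lt] at h1 h2
        linarith
      · linarith
      · linarith
      · linarith
  refine le_trans (Finset.sum_le_sum hle) ?_
  rw [← Finset.prod_univ_sum]
  exact le_of_eq (Finset.prod_eq_one fun t _ => (hpmf t).2.1)
end

section
/- Assume 0 ≤ c ≤ min P and let prices p^1, …, p^T be drawn independently with p^t ∼ π^t. For all p, q ∈ P and every ε > 0, Pr[ |R̃^T_{p,q}(c) − R̄^T_{p,q}(c)| ≥ ε ] ≤ 2·exp( −ε² / (2 Σ_{t=1}^T d_t²) ), where d_t = (1/T)·(1/min_{p′∈C^t} π^t(p′) + 1)·p̄. -/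
open Finset

noncomputable def xhatF (P : Finset ℝ) {T : ℕ} (π x : Fin T → ℝ → ℝ)
    (t : Fin T) (s : ℝ) (p : ℝ) : ℝ :=
  if p ∈ suppF P (π t) then (if p = s then x t s / π t s else 0)
  else if h : ((suppF P (π t)).filter fun r => r ≤ p).Nonempty then
    (if ((suppF P (π t)).filter fun r => r ≤ p).max' h = s then x t s / π t s else 0)
  else 1

noncomputable def Rtilpq (P : Finset ℝ) {T : ℕ} (π x : Fin T → ℝ → ℝ)
    (c p q : ℝ) (ps : Fin T → ℝ) : ℝ :=
  (T : ℝ)⁻¹ * ∑ t : Fin T, π t p *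
    ((q - c) * xhatF P π x t (ps t) q - (p - c) * xhatF P π x t (ps t) p)

noncomputable def Rbarpq (P : Finset ℝ) {T : ℕ} (π x : Fin T → ℝ → ℝ)
    (c p q : ℝ) : ℝ :=
  (T : ℝ)⁻¹ * ∑ t : Fin T, π t p *
    ((q - c) * pessA P π x t q - (p - c) * pessA P π x t p)

/-!
Under the product law of the prices, `Rtilpq - Rbarpq` is a sum over the rounds of independent
centred terms `Z_t(p^t) - E[Z_t]`. Indeed the propensity-score estimate is unbiased for the
pessimistic allocation: averaging `x̂^t(r)` over `p^t ∼ π^t` recovers `x^t` at the support point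
from which `r` reads its value (or the constant `1` below the support). Each term is bounded by
`d_t`, since `x̂^t ≤ 1 / min π^t` and `0 ≤ r - c ≤ p̄`, so Hoeffding's inequality for independent
bounded variables, applied to the sum and to its negation, gives the two-sided bound.
-/

open MeasureTheory ProbabilityTheory

theorem measureReal_sum_sub_integral_ge_le {ι : Type*} [Fintype ι] {Ω : ι → Type*}
    [∀ i, MeasurableSpace (Ω i)] (μ : ∀ i, Measure (Ω i)) [∀ i, IsProbabilityMeasure (μ i)]
    (Z : ∀ i, Ω i → ℝ) (hZm : ∀ i, AEMeasurable (Z i) (μ i)) (a b : ι → ℝ)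
    (hZ : ∀ i, ∀ᵐ x ∂μ i, Z i x ∈ Set.Icc (a i) (b i)) {ε : ℝ} (hε : 0 ≤ ε) :
    (Measure.pi μ).real {ω | ε ≤ ∑ i, (Z i (ω i) - ∫ x, Z i x ∂μ i)} ≤
      Real.exp (-ε ^ 2 / (2 * ∑ i, ((b i - a i) / 2) ^ 2)) := by
  have hindep : iIndepFun (fun i ω ↦ Z i (ω i) - ∫ x, Z i x ∂μ i) (Measure.pi μ) :=
    iIndepFun_pi fun i ↦ (hZm i).sub_const _
  have hsubG : ∀ i ∈ Finset.univ, HasSubgaussianMGF (fun ω ↦ Z i (ω i) - ∫ x, Z i x ∂μ i)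
      ((‖b i - a i‖₊ / 2) ^ 2) (Measure.pi μ) := by
    intro i _
    refine HasSubgaussianMGF.of_map (Y := Function.eval i)
      (X := fun x ↦ Z i x - ∫ x, Z i x ∂μ i) (measurable_pi_apply i).aemeasurable ?_
    rw [(measurePreserving_eval μ i).map_eq]
    exact hasSubgaussianMGF_of_mem_Icc (hZm i) (hZ i)
  convert HasSubgaussianMGF.measure_sum_ge_le_of_iIndepFun hindep hsubG hε using 4
  push_cast
  congr 1 with i
  rw [Real.norm_eq_abs, div_pow, div_pow, sq_abs]

theorem measureReal_abs_sum_sub_integral_ge_le {ι : Type*} [Fintype ι] {Ω : ι → Type*}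
    [∀ i, MeasurableSpace (Ω i)] (μ : ∀ i, Measure (Ω i)) [∀ i, IsProbabilityMeasure (μ i)]
    (Z : ∀ i, Ω i → ℝ) (hZm : ∀ i, AEMeasurable (Z i) (μ i)) (a b : ι → ℝ)
    (hZ : ∀ i, ∀ᵐ x ∂μ i, Z i x ∈ Set.Icc (a i) (b i)) {ε : ℝ} (hε : 0 ≤ ε) :
    (Measure.pi μ).real {ω | ε ≤ |∑ i, (Z i (ω i) - ∫ x, Z i x ∂μ i)|} ≤
      2 * Real.exp (-ε ^ 2 / (2 * ∑ i, ((b i - a i) / 2) ^ 2)) := by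
  have hupper := measureReal_sum_sub_integral_ge_le μ Z hZm a b hZ hε
  have hlower := measureReal_sum_sub_integral_ge_le μ (fun i x ↦ -Z i x)
    (fun i ↦ (hZm i).neg) (-b) (-a)
    (fun i ↦ (hZ i).mono fun x hx ↦ ⟨neg_le_neg hx.2, neg_le_neg hx.1⟩) hε
  simp only [integral_neg, Pi.neg_apply, neg_sub_neg] at hlower
  calc (Measure.pi μ).real {ω | ε ≤ |∑ i, (Z i (ω i) - ∫ x, Z i x ∂μ i)|}
      ≤ (Measure.pi μ).real ({ω | ε ≤ ∑ i, (Z i (ω i) - ∫ x, Z i x ∂μ i)} ∪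
          {ω | ε ≤ ∑ i, (∫ x, Z i x ∂μ i - Z i (ω i))}) := by
        refine measureReal_mono (fun ω (hω : ε ≤ |_|) ↦ ?_)
        rcases le_abs'.mp hω with h | h
        · right
          change ε ≤ ∑ i, _
          rw [Finset.sum_sub_distrib] at h ⊢
          linarith
        · exact Or.inl h
    _ ≤ _ := measureReal_union_le _ _
    _ ≤ _ := by linarith

section PMFMeasure

variable {α : Type*} [MeasurableSpace α] [MeasurableSingletonClass α] (P : Finset α) (w : α → ℝ)

noncomputable def pmfMeasure : Measure α :=
  ∑ s ∈ P, ENNReal.ofReal (w s) • Measure.dirac s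

theorem pmfMeasure_apply (S : Set α) :
    pmfMeasure P w S = ∑ s ∈ P, ENNReal.ofReal (w s) * S.indicator 1 s := by
  simp only [pmfMeasure, Measure.coe_finsetSum, Finset.sum_apply, Measure.smul_apply,
    Measure.dirac_apply, smul_eq_mul]

theorem ae_mem_pmfMeasure : ∀ᵐ s ∂pmfMeasure P w, s ∈ P := by
  rw [ae_iff, pmfMeasure_apply]
  exact Finset.sum_eq_zero fun s hs ↦ by simp [hs]

theorem aemeasurable_pmfMeasure {β : Type*} [MeasurableSpace β] (f : α → β) :
    AEMeasurable f (pmfMeasure P w) := by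
  classical
  induction P using Finset.induction_on with
  | empty => simp [pmfMeasure]
  | insert s P hs ih =>
    rw [pmfMeasure, Finset.sum_insert hs]
    exact (aemeasurable_dirac.smul_measure _).add_measure ih

theorem integral_pmfMeasure {w : α → ℝ} (hw : ∀ s, 0 ≤ w s) (f : α → ℝ) :
    ∫ s, f s ∂pmfMeasure P w = ∑ s ∈ P, w s * f s := by
  rw [pmfMeasure, integral_finsetSum_measure fun s _ ↦
    (integrable_dirac enorm_lt_top).smul_measure ENNReal.ofReal_ne_top]
  refine Finset.sum_congr rfl fun s _ ↦ ?_
  rw [integral_smul_measure, integral_dirac, ENNReal.toReal_ofReal (hw s), smul_eq_mul]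

end PMFMeasure

theorem isProbabilityMeasure_pmfMeasure {P : Finset ℝ} {w : ℝ → ℝ} (hw : IsPMF P w) :
    IsProbabilityMeasure (pmfMeasure P w) := by
  constructor
  rw [pmfMeasure_apply]
  simp only [Set.indicator_univ, Pi.one_apply, mul_one]
  rw [← ENNReal.ofReal_sum_of_nonneg fun s _ ↦ hw.1 s, hw.2.1, ENNReal.ofReal_one]

theorem probM_eq_measureReal_pi {P : Finset ℝ} {T : ℕ} {π : Fin T → ℝ → ℝ}
    (hpmf : ∀ t, IsPMF P (π t)) (E : (Fin T → ℝ) → Prop) :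
    probM P π E = (Measure.pi fun t ↦ pmfMeasure P (π t)).real {ps | E ps} := by
  classical
  have := fun t ↦ isProbabilityMeasure_pmfMeasure (hpmf t)
  have hpi : Measure.pi (fun t ↦ pmfMeasure P (π t)) =
      ∑ ps ∈ Fintype.piFinset fun _ ↦ P,
        (∏ t, ENNReal.ofReal (π t (ps t))) • Measure.dirac ps := by
    refine Measure.pi_eq fun S _ ↦ ?_
    simp only [pmfMeasure_apply, Finset.prod_univ_sum, Measure.coe_finsetSum, Finset.sum_apply,
      Measure.smul_apply, Measure.dirac_apply, smul_eq_mul]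
    refine Finset.sum_congr rfl fun ps _ ↦ ?_
    rw [← Finset.coe_univ, Set.indicator_pi_one_apply, Finset.prod_mul_distrib]
  simp only [hpi, probM, measureReal_def, Measure.coe_finsetSum, Finset.sum_apply,
    Measure.smul_apply, Measure.dirac_apply, smul_eq_mul, Set.indicator, Set.mem_ofPred_eq]
  rw [ENNReal.toReal_sum fun ps _ ↦ by split_ifs <;> simp [ENNReal.prod_ne_top]]
  refine Finset.sum_congr rfl fun ps _ ↦ ?_
  split_ifs <;> simp [ENNReal.toReal_prod, ENNReal.toReal_ofReal ((hpmf _).1 _)]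

theorem probM_abs_sum_sub_mean_ge_le {P : Finset ℝ} {T : ℕ} {π : Fin T → ℝ → ℝ}
    (hpmf : ∀ t, IsPMF P (π t)) (Z : Fin T → ℝ → ℝ) (d : Fin T → ℝ)
    (hZ : ∀ t, ∀ s ∈ P, |Z t s| ≤ d t) {ε : ℝ} (hε : 0 ≤ ε) :
    probM P π (fun ps ↦ ε ≤ |∑ t, (Z t (ps t) - ∑ s ∈ P, π t s * Z t s)|) ≤
      2 * Real.exp (-ε ^ 2 / (2 * ∑ t, d t ^ 2)) := by
  have := fun t ↦ isProbabilityMeasure_pmfMeasure (hpmf t)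
  have hbound : ∀ t, ∀ᵐ s ∂pmfMeasure P (π t), Z t s ∈ Set.Icc (-d t) (d t) := fun t ↦
    (ae_mem_pmfMeasure P (π t)).mono fun s hs ↦ abs_le.mp (hZ t s hs)
  have h := measureReal_abs_sum_sub_integral_ge_le _ Z
    (fun t ↦ aemeasurable_pmfMeasure P (π t) (Z t)) _ _ hbound hε
  have hhalf : ∀ t, (d t - -d t) / 2 = d t := fun t ↦ by ring
  simp only [integral_pmfMeasure P (hpmf _).1, hhalf] at h
  rwa [probM_eq_measureReal_pi hpmf]

section Estimator

variable {P : Finset ℝ} {T : ℕ} {π x : Fin T → ℝ → ℝ} {t : Fin T}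

theorem mem_suppF {f : ℝ → ℝ} {p : ℝ} : p ∈ suppF P f ↔ p ∈ P ∧ 0 < f p :=
  Finset.mem_filter

theorem sum_mul_ite_div_eq {u : ℝ} (hu : u ∈ suppF P (π t)) :
    ∑ s ∈ P, π t s * (if u = s then x t s / π t s else 0) = x t u := by
  obtain ⟨huP, hπu⟩ := mem_suppF.mp hu
  simp_rw [mul_ite, mul_zero]
  rw [Finset.sum_ite_eq, if_pos huP, mul_div_cancel₀ _ hπu.ne']

theorem sum_mul_xhatF (hπ : ∑ s ∈ P, π t s = 1) (r : ℝ) :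
    ∑ s ∈ P, π t s * xhatF P π x t s r = pessA P π x t r := by
  unfold xhatF pessA
  split_ifs with hr hlow
  · exact sum_mul_ite_div_eq hr
  · exact sum_mul_ite_div_eq (Finset.mem_filter.mp (Finset.max'_mem _ hlow)).1
  · simp [hπ]

theorem xhatF_mem_Icc (hπ : IsPMF P (π t)) (hx : IsAllocSeq P x)
    (hsupp : (suppF P (π t)).Nonempty) (s r : ℝ) :
    xhatF P π x t s r ∈ Set.Icc 0 (1 / (suppF P (π t)).inf' hsupp (π t)) := by
  obtain ⟨b, hb, hbm⟩ := Finset.exists_mem_eq_inf' hsupp (π t)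
  set m := (suppF P (π t)).inf' hsupp (π t)
  have hm0 : 0 < m := hbm ▸ (mem_suppF.mp hb).2
  have hm1 : m ≤ 1 := hbm ▸ hπ.2.1 ▸
    Finset.single_le_sum (fun s _ ↦ hπ.1 s) (mem_suppF.mp hb).1
  have hweight : ∀ u ∈ suppF P (π t), x t u / π t u ∈ Set.Icc 0 (1 / m) := by
    intro u hu
    obtain ⟨huP, hπu⟩ := mem_suppF.mp hu
    have hxu := (hx t).1 u huP
    exact ⟨div_nonneg hxu.1 hπu.le,
      div_le_div₀ zero_le_one hxu.2 hm0 (Finset.inf'_le (π t) hu)⟩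
  have hzero : (0 : ℝ) ∈ Set.Icc 0 (1 / m) := ⟨le_rfl, by positivity⟩
  unfold xhatF
  split_ifs with hr hrs hlow hs
  · exact hrs ▸ hweight r hr
  · exact hzero
  · exact hs ▸ hweight _ (Finset.mem_filter.mp (Finset.max'_mem _ hlow)).1
  · exact hzero
  · exact ⟨zero_le_one, by rwa [le_div_iff₀ hm0, one_mul]⟩

theorem abs_mul_sub_xhatF_le (hP : P.Nonempty) (hπ : IsPMF P (π t)) (hx : IsAllocSeq P x)
    (hsupp : (suppF P (π t)).Nonempty) {c p q : ℝ} (hc0 : 0 ≤ c) (hc1 : c ≤ P.min' hP)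
    (hp : p ∈ P) (hq : q ∈ P) (s : ℝ) :
    |π t p * ((q - c) * xhatF P π x t s q - (p - c) * xhatF P π x t s p)| ≤
      (1 / (suppF P (π t)).inf' hsupp (π t) + 1) * P.max' hP := by
  set m := (suppF P (π t)).inf' hsupp (π t)
  have hmax : 0 ≤ P.max' hP := hc0.trans (hc1.trans (P.min'_le_max' hP))
  have hterm : ∀ r ∈ P, (r - c) * xhatF P π x t s r ∈ Set.Icc 0 (P.max' hP * (1 / m)) := by
    intro r hr
    have hrc : r - c ∈ Set.Icc 0 (P.max' hP) :=
      ⟨by linarith [P.min'_le r hr], by linarith [P.le_max' r hr]⟩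
    have hxr := xhatF_mem_Icc hπ hx hsupp s r
    exact ⟨mul_nonneg hrc.1 hxr.1, mul_le_mul hrc.2 hxr.2 hxr.1 hmax⟩
  have hπp : π t p ≤ 1 := hπ.2.1 ▸ Finset.single_le_sum (fun s _ ↦ hπ.1 s) hp
  calc |π t p * ((q - c) * xhatF P π x t s q - (p - c) * xhatF P π x t s p)|
      = π t p * |(q - c) * xhatF P π x t s q - (p - c) * xhatF P π x t s p| := by
        rw [abs_mul, abs_of_nonneg (hπ.1 p)]
    _ ≤ 1 * (P.max' hP * (1 / m)) :=
        mul_le_mul hπp (abs_sub_le_of_nonneg_of_le (hterm q hq).1 (hterm q hq).2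
          (hterm p hp).1 (hterm p hp).2) (abs_nonneg _) zero_le_one
    _ ≤ (1 / m + 1) * P.max' hP := by nlinarith

end Estimator

theorem pairwise_regret_concentration_general
    (P : Finset ℝ) (hP : P.Nonempty) {T : ℕ} (π : Fin T → ℝ → ℝ)
    (hpmf : ∀ t, IsPMF P (π t)) (hsupp : ∀ t, (suppF P (π t)).Nonempty)
    (x : Fin T → ℝ → ℝ) (hx : IsAllocSeq P x)
    (c : ℝ) (hc0 : 0 ≤ c) (hc1 : c ≤ P.min' hP) :
    ∀ p ∈ P, ∀ q ∈ P, ∀ ε : ℝ, 0 < ε →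
      probM P π (fun ps => ε ≤ |Rtilpq P π x c p q ps - Rbarpq P π x c p q|) ≤
        2 * Real.exp (-(ε ^ 2) / (2 * ∑ t : Fin T,
          ((T : ℝ)⁻¹ * (1 / ((suppF P (π t)).inf' (hsupp t) (π t)) + 1) *
            P.max' hP) ^ 2)) := by
  intro p hp q hq ε hε
  set Z : Fin T → ℝ → ℝ := fun t s ↦ (T : ℝ)⁻¹ *
    (π t p * ((q - c) * xhatF P π x t s q - (p - c) * xhatF P π x t s p))
  have hmean : ∀ t, ∑ s ∈ P, π t s * Z t s =
      (T : ℝ)⁻¹ * (π t p * ((q - c) * pessA P π x t q - (p - c) * pessA P π x t p)) := by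
    intro t
    rw [← sum_mul_xhatF (hpmf t).2.1, ← sum_mul_xhatF (hpmf t).2.1, Finset.mul_sum,
      Finset.mul_sum, ← Finset.sum_sub_distrib, Finset.mul_sum, Finset.mul_sum]
    exact Finset.sum_congr rfl fun s _ ↦ by ring
  have hdecomp : ∀ ps, Rtilpq P π x c p q ps - Rbarpq P π x c p q =
      ∑ t, (Z t (ps t) - ∑ s ∈ P, π t s * Z t s) := by
    intro ps
    simp only [Rtilpq, Rbarpq, hmean, Finset.mul_sum, Finset.sum_sub_distrib, Z]
  have hZ : ∀ t, ∀ s ∈ P, |Z t s| ≤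
      (T : ℝ)⁻¹ * (1 / ((suppF P (π t)).inf' (hsupp t) (π t)) + 1) * P.max' hP := by
    intro t s _
    rw [abs_mul, abs_inv, Nat.abs_cast, mul_assoc]
    exact mul_le_mul_of_nonneg_left
      (abs_mul_sub_xhatF_le hP (hpmf t) hx (hsupp t) hc0 hc1 hp hq s) (by positivity)
  simp only [hdecomp]
  exact probM_abs_sum_sub_mean_ge_le hpmf Z _ hZ hε.le

/-- Azuma-Hoeffding concentration of the estimated pairwise regret around
the pessimistic pairwise regret. -/
theorem pairwise_regret_concentration
    (P : Finset ℝ) (hP : P.Nonempty) (hpos : ∀ p ∈ P, 0 < p)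
    {T : ℕ} (hT : 1 ≤ T) (π : Fin T → ℝ → ℝ)
    (hpmf : ∀ t, IsPMF P (π t)) (hsupp : ∀ t, (suppF P (π t)).Nonempty)
    (x : Fin T → ℝ → ℝ) (hx : IsAllocSeq P x)
    (c : ℝ) (hc0 : 0 ≤ c) (hc1 : c ≤ P.min' hP) :
    ∀ p ∈ P, ∀ q ∈ P, ∀ ε : ℝ, 0 < ε →
      probM P π (fun ps => ε ≤ |Rtilpq P π x c p q ps - Rbarpq P π x c p q|) ≤
        2 * Real.exp (-(ε ^ 2) / (2 * ∑ t : Fin T,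
          ((T : ℝ)⁻¹ * (1 / ((suppF P (π t)).inf' (hsupp t) (π t)) + 1) *
            P.max' hP) ^ 2)) :=
  pairwise_regret_concentration_general P hP π hpmf hsupp x hx c hc0 hc1
end

section
/- (Multiplicative weights updates move slowly.) Fix ε > 0 and an integer k ≥ 1. For V ∈ ℝ^k and r ∈ [0,1]^k, define probability vectors π and π′ on {1,…,k} by π(i) = (1+ε)^{V_i} / Σ_{j=1}^k (1+ε)^{V_j} and π′(i) = (1+ε)^{V_i + r_i} / Σ_{j=1}^k (1+ε)^{V_j + r_j}. Then |π′(i) − π(i)| ≤ ε for every i; i.e., one step of the multiplicative weights update with learning rate ε and rewards in [0,1] changes the action distribution by at most ε in the sup norm. -/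
/-- one step of multiplicative weights update with learning rate `ε` and
rewards in `[0,1]` moves the action distribution by at most `ε` in sup norm. -/
theorem mwu_step_moves_slowly
    (ε : ℝ) (hε : 0 < ε) (k : ℕ) (hk : 1 ≤ k)
    (V r : Fin k → ℝ) (hr : ∀ i, r i ∈ Set.Icc (0:ℝ) 1) (i : Fin k) :
    |(1 + ε) ^ (V i + r i) / (∑ j : Fin k, (1 + ε) ^ (V j + r j)) -
      (1 + ε) ^ (V i) / (∑ j : Fin k, (1 + ε) ^ (V j))| ≤ ε := by
  haveI : Nonempty (Fin k) := Fin.pos_iff_nonempty.mp (by omega)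
  have h0 : (0:ℝ) < 1 + ε := by linarith
  have h1 : (1:ℝ) ≤ 1 + ε := by linarith
  set b : ℝ := 1 + ε with hb
  have hw : ∀ j, (0:ℝ) < b ^ (V j) := fun j => Real.rpow_pos_of_pos h0 _
  have hw' : ∀ j, (0:ℝ) < b ^ (V j + r j) := fun j => Real.rpow_pos_of_pos h0 _
  set S : ℝ := ∑ j : Fin k, b ^ (V j) with hS
  set S' : ℝ := ∑ j : Fin k, b ^ (V j + r j) with hS'
  have hSpos : 0 < S := Finset.sum_pos (fun j _ => hw j) Finset.univ_nonempty
  have hS'pos : 0 < S' := Finset.sum_pos (fun j _ => hw' j) Finset.univ_nonempty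
  -- lower/upper bounds on each new weight
  have hlow : ∀ j, b ^ (V j) ≤ b ^ (V j + r j) := fun j =>
    Real.rpow_le_rpow_of_exponent_le h1 (by linarith [(hr j).1])
  have hhigh : ∀ j, b ^ (V j + r j) ≤ b * b ^ (V j) := by
    intro j
    have : b ^ (V j + r j) = b ^ (V j) * b ^ (r j) := Real.rpow_add h0 _ _
    rw [this]
    have h2 : b ^ (r j) ≤ b ^ (1:ℝ) :=
      Real.rpow_le_rpow_of_exponent_le h1 (hr j).2
    rw [Real.rpow_one] at h2
    have := mul_le_mul_of_nonneg_left h2 (hw j).le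
    linarith
  have hSS' : S ≤ S' := Finset.sum_le_sum (fun j _ => hlow j)
  have hS'bS : S' ≤ b * S := by
    calc S' ≤ ∑ j : Fin k, b * b ^ (V j) := Finset.sum_le_sum (fun j _ => hhigh j)
    _ = b * S := by rw [Finset.mul_sum]
  set q : ℝ := b ^ (V i) / S with hq
  have hq0 : 0 ≤ q := div_nonneg (hw i).le hSpos.le
  have hq1 : q ≤ 1 := by
    rw [hq, div_le_one hSpos]
    exact Finset.single_le_sum (fun j _ => (hw j).le) (Finset.mem_univ i)
  -- upper bound: π' ≤ b * q ≤ q + ε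
  have hup : b ^ (V i + r i) / S' ≤ q + ε := by
    have h3 : b ^ (V i + r i) / S' ≤ (b * b ^ (V i)) / S :=
      div_le_div₀ (by positivity) (hhigh i) hSpos hSS'
    have h4 : (b * b ^ (V i)) / S = b * q := by rw [hq]; ring
    have h5 : b * q ≤ q + ε := by rw [hb]; nlinarith
    exact le_trans (h3.trans_eq h4) h5
  -- lower bound: π' ≥ q / b ≥ q - ε
  have hdown : q - ε ≤ b ^ (V i + r i) / S' := by
    have h3 : b ^ (V i) / (b * S) ≤ b ^ (V i + r i) / S' :=
      div_le_div₀ (hw' i).le (hlow i) hS'pos hS'bS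
    have h4 : b ^ (V i) / (b * S) = q / b := by
      rw [hq, div_div, mul_comm]
    have h5 : q - ε ≤ q / b := by
      rw [le_div_iff₀ h0, hb]; nlinarith
    linarith
  rw [abs_le]
  constructor <;> linarith
end

section
/- Let T > 0 be real, 0 < γ ≤ 0.001, and ε = √γ. Define piecewise-linear functions on [0, 2.1T]: r₀(t) = 0; r₁(t) = 0.385·t for t ≤ T and r₁(t) = 0.385·T + 0.795·(t − T) for t ≥ T; r₂(t) = (0.3 − ε)·t for t ≤ T and r₂(t) = (0.3 − ε)·T + 1.23·(t − T) for t ≥ T; r₃(t) = (0.385 − ε)·t for t ≤ T and r₃(t) = (0.385 − ε)·T + 1.155·(t − T) for t ≥ T. Then: (i) for every t ∈ [3εT, T], r₁(t) > r_j(t) + 2.1·γ·T for each j ∈ {0, 2, 3}; and (ii) for every t ∈ [T + 3.2εT, 2.1T], r₃(t) > r_j(t) + 2.1·γ·T for each j ∈ {0, 1, 2}. -/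
/-- the cumulative expected-reward curves of the manipulated seller.
On `[3εT, T]` price 1 dominates every other price by more than `2.1 γ T`, and on
`[T + 3.2εT, 2.1T]` price 3 dominates every other price by more than `2.1 γ T`. -/
theorem manipulation_reward_curves
    (T γ : ℝ) (hT : 0 < T) (hγ0 : 0 < γ) (hγ : γ ≤ 0.001)
    (ε : ℝ) (hε : ε = Real.sqrt γ)
    (r0 r1 r2 r3 : ℝ → ℝ)
    (hr0 : ∀ t, r0 t = 0)
    (hr1 : ∀ t, r1 t = if t ≤ T then 0.385 * t else 0.385 * T + 0.795 * (t - T))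
    (hr2 : ∀ t, r2 t = if t ≤ T then (0.3 - ε) * t else (0.3 - ε) * T + 1.23 * (t - T))
    (hr3 : ∀ t, r3 t =
      if t ≤ T then (0.385 - ε) * t else (0.385 - ε) * T + 1.155 * (t - T)) :
    (∀ t : ℝ, 3 * ε * T ≤ t → t ≤ T →
      r0 t + 2.1 * γ * T < r1 t ∧ r2 t + 2.1 * γ * T < r1 t ∧
        r3 t + 2.1 * γ * T < r1 t) ∧
    (∀ t : ℝ, T + 3.2 * ε * T ≤ t → t ≤ 2.1 * T →
      r0 t + 2.1 * γ * T < r3 t ∧ r1 t + 2.1 * γ * T < r3 t ∧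
        r2 t + 2.1 * γ * T < r3 t) := by

  have hε0 : 0 < ε := hε ▸ Real.sqrt_pos.mpr hγ0
  have hεsq : ε ^ 2 = γ := by
    rw [hε]; exact Real.sq_sqrt hγ0.le
  have hεle : ε ≤ 0.032 := by
    rw [hε]
    have : Real.sqrt γ ≤ Real.sqrt 0.001024 := Real.sqrt_le_sqrt (by linarith)
    have h2 : Real.sqrt 0.001024 = 0.032 := by
      rw [show (0.001024 : ℝ) = 0.032 ^ 2 by norm_num, Real.sqrt_sq (by norm_num)]
    linarith
  constructor
  · intro t h1 h2
    rw [hr0, hr1, hr2, hr3, if_pos h2, if_pos h2, if_pos h2]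
    refine ⟨?_, ?_, ?_⟩ <;> nlinarith [mul_pos hε0 hT, sq_nonneg ε, mul_nonneg hε0.le hT.le]
  · intro t h1 h2
    have ht : ¬ t ≤ T := by nlinarith [mul_pos hε0 hT]
    rw [hr0, hr1, hr2, hr3, if_neg ht, if_neg ht, if_neg ht]
    refine ⟨?_, ?_, ?_⟩ <;> nlinarith [mul_pos hε0 hT, sq_nonneg ε, mul_nonneg hε0.le hT.le]
end

section
/- (Mean-based learners are manipulated into supra-competitive prices.) Let T ≥ 200 be an integer, 0 < γ ≤ 0.001, ε = √γ, and N = ⌈2.1·T⌉. Define per-round rewards for prices p ∈ {0,1,2,3}: for rounds s ≤ T, u^s(0) = 0, u^s(1) = 0.385, u^s(2) = 0.3 − ε, u^s(3) = 0.385 − ε; for rounds s > T, u^s(0) = 0, u^s(1) = 0.795, u^s(2) = 1.23, u^s(3) = 1.155; and let σ_{p,t} = Σ_{s=1}^t u^s(p). Call a sequence of probability mass functions ρ^1, …, ρ^N on {0,1,2,3} γ-mean-based if for every round t ∈ {1,…,N} and every price p, whenever there exists q with σ_{q,t−1} > σ_{p,t−1} + γ·N, then ρ^t(p) ≤ γ.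 Then every γ-mean-based sequence satisfies: (i) ρ^t(1) ≥ 1 − 3γ for every integer round t with 3εT + 1 ≤ t ≤ T; and (ii) ρ^t(3) ≥ 1 − 3γ for every integer round t with T + 3.2εT + 1 ≤ t ≤ N. -/
lemma sum_if_le_of_le (T m : ℕ) (a b : ℝ) (h : m ≤ T) :
    ∑ s ∈ Finset.Icc 1 m, (if s ≤ T then a else b) = m * a := by
  have hc : ∀ s ∈ Finset.Icc 1 m, (if s ≤ T then a else b) = a := by
    intro s hs
    rw [if_pos (le_trans (Finset.mem_Icc.mp hs).2 h)]
  rw [Finset.sum_congr rfl hc, Finset.sum_const, Nat.card_Icc]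
  simp

lemma sum_if_le_of_ge (T m : ℕ) (a b : ℝ) (h : T ≤ m) :
    ∑ s ∈ Finset.Icc 1 m, (if s ≤ T then a else b) = T * a + ((m - T : ℕ) : ℝ) * b := by
  have h1 : Finset.Icc 1 m = Finset.Ioc 0 m := by
    rw [show (1:ℕ) = 0 + 1 from rfl, Finset.Icc_add_one_left_eq_Ioc]
  rw [h1, ← Finset.sum_Ioc_consecutive _ (Nat.zero_le T) h]
  have e1 : ∑ s ∈ Finset.Ioc 0 T, (if s ≤ T then a else b) = T * a := by
    have hc : ∀ s ∈ Finset.Ioc 0 T, (if s ≤ T then a else b) = a := by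
      intro s hs
      rw [if_pos (Finset.mem_Ioc.mp hs).2]
    rw [Finset.sum_congr rfl hc, Finset.sum_const, Nat.card_Ioc]
    simp
  have e2 : ∑ s ∈ Finset.Ioc T m, (if s ≤ T then a else b) = ((m - T : ℕ) : ℝ) * b := by
    have hc : ∀ s ∈ Finset.Ioc T m, (if s ≤ T then a else b) = b := by
      intro s hs
      rw [if_neg (not_le.mpr (Finset.mem_Ioc.mp hs).1)]
    rw [Finset.sum_congr rfl hc, Finset.sum_const, Nat.card_Ioc]
    simp
  rw [e1, e2]


set_option maxHeartbeats 1600000 in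
/-- against the manipulator (price 1 for the first `T` rounds, then
price 3), every `γ`-mean-based learner posts price 1 with probability at least
`1 - 3γ` in each round `t ∈ [3εT + 1, T]` and posts price 3 with probability at least
`1 - 3γ` in each round `t ∈ [T + 3.2εT + 1, N]`, where `N = ⌈2.1 T⌉`. -/
theorem mean_based_learner_is_manipulated
    (T : ℕ) (hT : 200 ≤ T) (γ : ℝ) (hγ0 : 0 < γ) (hγ : γ ≤ 0.001)
    (ε : ℝ) (hε : ε = Real.sqrt γ)
    (N : ℕ) (hN : N = ⌈(2.1 : ℝ) * T⌉₊)
    (u : ℕ → ℕ → ℝ)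
    (hu : ∀ s p, u s p =
      if s ≤ T then
        (if p = 0 then 0 else if p = 1 then 0.385 else
          if p = 2 then 0.3 - ε else 0.385 - ε)
      else
        (if p = 0 then 0 else if p = 1 then 0.795 else
          if p = 2 then 1.23 else 1.155))
    (σc : ℕ → ℕ → ℝ) (hσ : ∀ p t, σc p t = ∑ s ∈ Finset.Icc 1 t, u s p)
    (ρ : ℕ → ℕ → ℝ)
    (hρ0 : ∀ t p, 0 ≤ ρ t p)
    (hρ1 : ∀ t, ∑ p ∈ Finset.range 4, ρ t p = 1)
    (hmb : ∀ t, 1 ≤ t → t ≤ N → ∀ p < 4,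
      (∃ q < 4, σc p (t - 1) + γ * N < σc q (t - 1)) → ρ t p ≤ γ) :
    (∀ t : ℕ, 3 * ε * T + 1 ≤ (t : ℝ) → t ≤ T → 1 - 3 * γ ≤ ρ t 1) ∧
    (∀ t : ℕ, (T : ℝ) + 3.2 * ε * T + 1 ≤ (t : ℝ) → t ≤ N → 1 - 3 * γ ≤ ρ t 3) := by
  -- basic facts
  have hT' : (200 : ℝ) ≤ (T : ℝ) := by exact_mod_cast hT
  have hε0 : 0 < ε := by rw [hε]; exact Real.sqrt_pos.mpr hγ0
  have hε2 : ε ^ 2 = γ := by rw [hε, sq, Real.mul_self_sqrt hγ0.le]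
  have hεub : ε ≤ 0.0317 := by nlinarith [sq_nonneg (ε - 0.0317)]
  have hNge : (2.1 : ℝ) * T ≤ (N : ℝ) := by rw [hN]; exact Nat.le_ceil _
  have hNle : (N : ℝ) ≤ 2.1 * T + 1 := by
    rw [hN]; exact le_of_lt (Nat.ceil_lt_add_one (by positivity))
  have hTN : T ≤ N := by
    have : (T : ℝ) ≤ (N : ℝ) := by nlinarith
    exact_mod_cast this
  -- per-price evaluation of u
  have hu0 : ∀ s, u s 0 = if s ≤ T then (0:ℝ) else 0 := by intro s; rw [hu]; norm_num
  have hu1 : ∀ s, u s 1 = if s ≤ T then (0.385:ℝ) else 0.795 := by intro s; rw [hu]; norm_num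
  have hu2 : ∀ s, u s 2 = if s ≤ T then (0.3 - ε : ℝ) else 1.23 := by intro s; rw [hu]; norm_num
  have hu3 : ∀ s, u s 3 = if s ≤ T then (0.385 - ε : ℝ) else 1.155 := by intro s; rw [hu]; norm_num
  constructor
  · -- part (i)
    intro t ht1 ht2
    have ht1' : 1 ≤ t := by
      have : (1 : ℝ) ≤ (t : ℝ) := by nlinarith
      exact_mod_cast this
    set m := t - 1 with hm
    have hmT : m ≤ T := le_trans (Nat.sub_le t 1) ht2
    have hmc : (m : ℝ) = (t : ℝ) - 1 := by
      rw [hm, Nat.cast_sub ht1']; norm_num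
    have hmlb : 3 * ε * T ≤ (m : ℝ) := by rw [hmc]; linarith
    have hσ0 : σc 0 m = 0 := by
      rw [hσ]; simp only [hu0]; rw [sum_if_le_of_le T m _ _ hmT]; ring
    have hσ1 : σc 1 m = (m : ℝ) * 0.385 := by
      rw [hσ]; simp only [hu1]; exact sum_if_le_of_le T m _ _ hmT
    have hσ2 : σc 2 m = (m : ℝ) * (0.3 - ε) := by
      rw [hσ]; simp only [hu2]; exact sum_if_le_of_le T m _ _ hmT
    have hσ3 : σc 3 m = (m : ℝ) * (0.385 - ε) := by
      rw [hσ]; simp only [hu3]; exact sum_if_le_of_le T m _ _ hmT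
    have htN : t ≤ N := le_trans ht2 hTN
    have hm0 : (0:ℝ) ≤ (m : ℝ) := Nat.cast_nonneg m
    have key : γ * N < ε * (m : ℝ) := by
      have k1 : γ * N ≤ γ * (2.1 * T + 1) := mul_le_mul_of_nonneg_left hNle hγ0.le
      have k2 : γ * (2.1 * T + 1) < γ * (3 * T) := by
        apply mul_lt_mul_of_pos_left _ hγ0
        linarith
      have k3 : γ * (3 * T) = ε * (3 * ε * T) := by rw [← hε2]; ring
      have k4 : ε * (3 * ε * T) ≤ ε * (m : ℝ) := mul_le_mul_of_nonneg_left hmlb hε0.le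
      linarith
    have hb0 : ρ t 0 ≤ γ := by
      refine hmb t ht1' htN 0 (by norm_num) ⟨1, by norm_num, ?_⟩
      rw [hσ0, hσ1]
      have : 0 ≤ (0.385 - ε) * (m : ℝ) := mul_nonneg (by linarith) hm0
      linarith [key]
    have hb2 : ρ t 2 ≤ γ := by
      refine hmb t ht1' htN 2 (by norm_num) ⟨1, by norm_num, ?_⟩
      rw [hσ2, hσ1]
      linarith [key]
    have hb3 : ρ t 3 ≤ γ := by
      refine hmb t ht1' htN 3 (by norm_num) ⟨1, by norm_num, ?_⟩
      rw [hσ3, hσ1]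
      linarith [key]
    have hsum := hρ1 t
    simp [Finset.sum_range_succ] at hsum
    linarith
  · -- part (ii)
    intro t ht1 ht2
    have hεT0 : 0 < ε * T := mul_pos hε0 (by linarith)
    have ht1' : 1 ≤ t := by
      have : (1 : ℝ) ≤ (t : ℝ) := by nlinarith
      exact_mod_cast this
    set m := t - 1 with hm
    have hmc : (m : ℝ) = (t : ℝ) - 1 := by
      rw [hm, Nat.cast_sub ht1']; norm_num
    have hmlb : (T : ℝ) + 3.2 * ε * T ≤ (m : ℝ) := by rw [hmc]; linarith
    have hTm : T ≤ m := by
      have : (T : ℝ) ≤ (m : ℝ) := by nlinarith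
      exact_mod_cast this
    have hmub : (m : ℝ) ≤ 2.1 * T := by
      have htN' : (t : ℝ) ≤ (N : ℝ) := by exact_mod_cast ht2
      rw [hmc]; linarith
    have hk : ((m - T : ℕ) : ℝ) = (m : ℝ) - T := by rw [Nat.cast_sub hTm]
    have hσ0 : σc 0 m = 0 := by
      rw [hσ]; simp only [hu0]; rw [sum_if_le_of_ge T m _ _ hTm]; ring
    have hσ1 : σc 1 m = (T : ℝ) * 0.385 + ((m : ℝ) - T) * 0.795 := by
      rw [hσ]; simp only [hu1]; rw [sum_if_le_of_ge T m _ _ hTm, hk]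
    have hσ2 : σc 2 m = (T : ℝ) * (0.3 - ε) + ((m : ℝ) - T) * 1.23 := by
      rw [hσ]; simp only [hu2]; rw [sum_if_le_of_ge T m _ _ hTm, hk]
    have hσ3 : σc 3 m = (T : ℝ) * (0.385 - ε) + ((m : ℝ) - T) * 1.155 := by
      rw [hσ]; simp only [hu3]; rw [sum_if_le_of_ge T m _ _ hTm, hk]
    have hgN : γ * N ≤ 0.001 * (2.1 * T + 1) := by
      calc γ * N ≤ γ * (2.1 * T + 1) := mul_le_mul_of_nonneg_left hNle hγ0.le
        _ ≤ 0.001 * (2.1 * T + 1) := mul_le_mul_of_nonneg_right hγ (by linarith)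
    have hεT : ε * T ≤ 0.0317 * T := mul_le_mul_of_nonneg_right hεub (by linarith)
    have hb0 : ρ t 0 ≤ γ := by
      refine hmb t ht1' ht2 0 (by norm_num) ⟨3, by norm_num, ?_⟩
      rw [hσ0, hσ3]
      linarith [hgN, hεT, hmlb]
    have hb1 : ρ t 1 ≤ γ := by
      refine hmb t ht1' ht2 1 (by norm_num) ⟨3, by norm_num, ?_⟩
      rw [hσ1, hσ3]
      have e1 : ε * (2.1 * T + 1) ≤ 0.0317 * (2.1 * T + 1) :=
        mul_le_mul_of_nonneg_right hεub (by linarith)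
      have e2 : γ * N ≤ ε * (0.0317 * (2.1 * T + 1)) := by
        calc γ * N ≤ γ * (2.1 * T + 1) := mul_le_mul_of_nonneg_left hNle hγ0.le
          _ = ε * (ε * (2.1 * T + 1)) := by rw [← hε2]; ring
          _ ≤ ε * (0.0317 * (2.1 * T + 1)) := mul_le_mul_of_nonneg_left e1 hε0.le
      have e3 : ε * 200 ≤ ε * T := mul_le_mul_of_nonneg_left hT' hε0.le
      linarith [e2, e3, hmlb]
    have hb2 : ρ t 2 ≤ γ := by
      refine hmb t ht1' ht2 2 (by norm_num) ⟨3, by norm_num, ?_⟩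
      rw [hσ2, hσ3]
      linarith [hgN, hmub]
    have hsum := hρ1 t
    simp [Finset.sum_range_succ] at hsum
    linarith
end

section
/- Fix 0 ≤ ε ≤ 0.05 and consider the two-player bimatrix game with action set {1, 2, 3} for each player and payoffs u₁, u₂ given by: u₁(1,1)=0.615, u₁(1,2)=0.85+ε/2, u₁(1,3)=523/600+ε/3, u₁(2,1)=0.77, u₁(2,2)=1.23, u₁(2,3)=1.7+ε, u₁(3,1)=0.615, u₁(3,2)=1.155, u₁(3,3)=1.845; u₂(1,1)=0.385, u₂(1,2)=0.3−ε, u₂(1,3)=0.385−ε, u₂(2,1)=0.615, u₂(2,2)=0.77, u₂(2,3)=0.45−1.5ε, u₂(3,1)=0.795, u₂(3,2)=1.23, u₂(3,3)=1.155. Then the unique correlated equilibrium of this game is the point mass on the action profile (2, 2); in particular (2,2) is a pure Nash equilibrium, and every correlated equilibrium gives player 1 payoff exactly 1.23 and player 2 payoff exactly 0.77. -/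
/-- A correlated equilibrium of a two-player bimatrix game with 3 actions per player. -/
def IsCorrEq (u1 u2 : Fin 3 → Fin 3 → ℝ) (μ : Fin 3 → Fin 3 → ℝ) : Prop :=
  (∀ a b, 0 ≤ μ a b) ∧ (∑ a : Fin 3, ∑ b : Fin 3, μ a b = 1) ∧
  (∀ a a' : Fin 3, 0 ≤ ∑ b : Fin 3, μ a b * (u1 a b - u1 a' b)) ∧
  (∀ b b' : Fin 3, 0 ≤ ∑ a : Fin 3, μ a b * (u2 a b - u2 a b'))

set_option maxHeartbeats 1000000 in
lemma key_ce (ε : ℝ) (hε0 : 0 ≤ ε) (hε : ε ≤ 0.05) (μ : Fin 3 → Fin 3 → ℝ)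
    (h : IsCorrEq
      (fun a b => !![(0.615 : ℝ), 0.85 + ε / 2, 523 / 600 + ε / 3;
         0.77, 1.23, 1.7 + ε; 0.615, 1.155, 1.845] a b)
      (fun a b => !![(0.385 : ℝ), 0.3 - ε, 0.385 - ε;
         0.615, 0.77, 0.45 - 1.5 * ε; 0.795, 1.23, 1.155] a b) μ) :
    ∀ a b, μ a b = if a = 1 ∧ b = 1 then 1 else 0 := by
  obtain ⟨hpos, hsum, h1, h2⟩ := h
  have c01 := h1 0 1
  have c21 := h1 2 1
  have d01 := h2 0 1
  have d21 := h2 2 1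
  simp [Fin.sum_univ_three] at c01 c21 d01 d21 hsum
  have e5 : (0:ℝ) ≤ μ 0 1 * (0.05 - ε) := mul_nonneg (hpos 0 1) (by linarith)
  have e6 : (0:ℝ) ≤ μ 0 2 * ε := mul_nonneg (hpos 0 2) hε0
  have z00 : μ 0 0 = 0 := by linarith [hpos 0 0, hpos 0 1, hpos 0 2]
  have z01 : μ 0 1 = 0 := by linarith [hpos 0 0, hpos 0 1, hpos 0 2]
  have z02 : μ 0 2 = 0 := by linarith [hpos 0 0, hpos 0 1, hpos 0 2]
  have e7 : μ 0 0 * (0.385 - (0.3 - ε)) = 0 := by rw [z00]; ring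
  have z10 : μ 1 0 = 0 := by linarith [hpos 1 0, hpos 2 0]
  have z20 : μ 2 0 = 0 := by linarith [hpos 1 0, hpos 2 0]
  have e8 : (0:ℝ) ≤ μ 1 2 * ε := mul_nonneg (hpos 1 2) hε0
  have z12 : μ 1 2 = 0 := by linarith [hpos 1 2, hpos 2 2]
  have z22 : μ 2 2 = 0 := by linarith [hpos 1 2, hpos 2 2]
  have e9 : μ 2 2 * (1.845 - (1.7 + ε)) = 0 := by rw [z22]; ring
  have z21 : μ 2 1 = 0 := by linarith [hpos 2 1]
  have o11 : μ 1 1 = 1 := by linarith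
  intro a b
  fin_cases a <;> fin_cases b <;> simp [z00, z01, z02, z10, z12, z20, z21, z22, o11]

set_option maxHeartbeats 1000000 in
/-- the empirical price-competition game has a unique correlated
equilibrium, the point mass on the profile `(2,2)` (here the middle actions `(1,1)`);
in particular `(2,2)` is a pure Nash equilibrium and every correlated equilibrium gives
the players payoffs exactly `1.23` and `0.77`. -/
theorem unique_correlated_equilibrium
    (ε : ℝ) (hε0 : 0 ≤ ε) (hε : ε ≤ 0.05)
    (u1 u2 : Fin 3 → Fin 3 → ℝ)
    (hu1 : u1 = fun a b =>
      !![(0.615 : ℝ), 0.85 + ε / 2, 523 / 600 + ε / 3;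
         0.77, 1.23, 1.7 + ε;
         0.615, 1.155, 1.845] a b)
    (hu2 : u2 = fun a b =>
      !![(0.385 : ℝ), 0.3 - ε, 0.385 - ε;
         0.615, 0.77, 0.45 - 1.5 * ε;
         0.795, 1.23, 1.155] a b) :
    (∀ μ : Fin 3 → Fin 3 → ℝ, IsCorrEq u1 u2 μ →
      ∀ a b, μ a b = if a = 1 ∧ b = 1 then 1 else 0) ∧
    (∀ a : Fin 3, u1 a 1 ≤ u1 1 1) ∧ (∀ b : Fin 3, u2 1 b ≤ u2 1 1) ∧
    (∀ μ : Fin 3 → Fin 3 → ℝ, IsCorrEq u1 u2 μ →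
      (∑ a : Fin 3, ∑ b : Fin 3, μ a b * u1 a b) = 1.23 ∧
      (∑ a : Fin 3, ∑ b : Fin 3, μ a b * u2 a b) = 0.77) := by
  subst hu1 hu2
  have key := key_ce ε hε0 hε
  refine ⟨key, ?_, ?_, ?_⟩
  · intro a; fin_cases a <;> simp <;> linarith
  · intro b; fin_cases b <;> simp <;> linarith
  · intro μ hμ
    have hk := key μ hμ
    constructor <;> simp [Fin.sum_univ_three, hk]
end

section
/- (One-sided consistency forces pessimistic estimates.) Let A be a function assigning a real number to every transcript (a tuple ((y^t, p^t, π^t))_{t=1}^T for any T). Suppose A is one-sided consistent: for every cost c, every ε > 0, and every family, indexed by T ≥ 1, of price-distribution sequences π_T of length T together with allocation sequences x_T of length T, one has lim_{T→∞} Pr[ A((x_T^t(p^t), p^t, π_T^t)_{t=1}^T) < R^T(x_T, c) − ε ] = 0 (prices p^t ∼ π_T^t drawn independently). Then for every such family, every cost c, and every ε > 0, also lim_{T→∞} Pr[ A((x_T^t(p^t), p^t, π_T^t)_{t=1}^T) < R̄^T(x_T, c) − ε ] = 0, where R̄^T is the pessimistic regret. -/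
open Finset

def ValidSeq (P : Finset ℝ) {T : ℕ} (π x : Fin T → ℝ → ℝ) : Prop :=
  (∀ t, IsPMF P (π t)) ∧ (∀ t, (suppF P (π t)).Nonempty) ∧ IsAllocSeq P x

/-- one-sided consistency forces pessimistic estimates: any regret
estimator that asymptotically never underestimates the true calibrated regret must
also asymptotically never underestimate the pessimistic regret. -/
theorem one_sided_consistency_forces_pessimism
    (P : Finset ℝ) (hP : P.Nonempty) (hpos : ∀ p ∈ P, 0 < p)
    (A : (T : ℕ) → (Fin T → ℝ × ℝ × (ℝ → ℝ)) → ℝ)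
    (hcons : ∀ (π x : (T : ℕ) → Fin T → ℝ → ℝ),
      (∀ T, ValidSeq P (π T) (x T)) → ∀ c ε : ℝ, 0 < ε →
      Filter.Tendsto (fun T : ℕ =>
          probM P (π T) fun ps =>
            A T (fun t => (x T t (ps t), ps t, π T t)) < regret P hP (π T) (x T) c - ε)
        Filter.atTop (nhds 0)) :
    ∀ (π x : (T : ℕ) → Fin T → ℝ → ℝ),
      (∀ T, ValidSeq P (π T) (x T)) → ∀ c ε : ℝ, 0 < ε →
      Filter.Tendsto (fun T : ℕ =>
          probM P (π T) fun ps =>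
            A T (fun t => (x T t (ps t), ps t, π T t)) < pregret P hP (π T) (x T) c - ε)
        Filter.atTop (nhds 0) := by
  intro π x hval c ε hε
  have hz : ∀ T : ℕ, ∃ z : Fin T → ℝ → ℝ,
      IsAllocSeq P z ∧ Indist P (π T) (x T) z ∧
      pregret P hP (π T) (x T) c - ε / 2 < regret P hP (π T) z c := by
    intro T
    have hne : ((fun z => regret P hP (π T) z c) ''
        {z | IsAllocSeq P z ∧ Indist P (π T) (x T) z}).Nonempty :=
      ⟨regret P hP (π T) (x T) c, ⟨x T, ⟨(hval T).2.2, fun t p _ => rfl⟩, rfl⟩⟩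
    have hlt : pregret P hP (π T) (x T) c - ε / 2 < pregret P hP (π T) (x T) c := by
      linarith
    obtain ⟨a, ⟨z, hzmem, rfl⟩, ha⟩ := exists_lt_of_lt_csSup hne hlt
    exact ⟨z, hzmem.1, hzmem.2, ha⟩
  choose z hz1 hz2 hz3 using hz
  have hvalz : ∀ T, ValidSeq P (π T) (z T) :=
    fun T => ⟨(hval T).1, (hval T).2.1, hz1 T⟩
  have hmain := hcons π z hvalz c (ε / 2) (by linarith)
  refine squeeze_zero (fun T => ?_) (fun T => ?_) hmain
  · exact Finset.sum_nonneg fun ps _ => by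
      split
      · exact Finset.prod_nonneg fun t _ => ((hval T).1 t).1 (ps t)
      · exact le_refl 0
  · unfold probM
    apply Finset.sum_le_sum
    intro ps hps
    by_cases hw : (∏ t, π T t (ps t)) = 0
    · split_ifs <;> simp [hw]
    · have hsupp : ∀ t, ps t ∈ suppF P (π T t) := by
        intro t
        have hne := Finset.prod_ne_zero_iff.mp hw t (Finset.mem_univ t)
        have hmem : ps t ∈ P := by
          rw [Fintype.mem_piFinset] at hps; exact hps t
        exact Finset.mem_filter.mpr
          ⟨hmem, lt_of_le_of_ne (((hval T).1 t).1 (ps t)) (Ne.symm hne)⟩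
      have heq : (fun t => (x T t (ps t), ps t, π T t))
          = fun t => (z T t (ps t), ps t, π T t) := by
        funext t
        rw [hz2 T t (ps t) (hsupp t)]
      split_ifs with h1 h2
      · exact le_refl _
      · exfalso
        apply h2
        rw [← heq]
        have := hz3 T
        linarith
      · exact Finset.prod_nonneg fun t _ => ((hval T).1 t).1 (ps t)
      · exact le_refl 0
end
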